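/- Let B : Matrix (Fin n) (Fin m) ℝ be an orientation matrix of a signed graph Σ (every column has exactly two nonzero entries, each ±1, in distinct rows; no two distinct columns have their nonzero entries in the same pair of rows), with adjacency matrix A := D − B * Bᵀ (D the diagonal of B * Bᵀ) and degrees d i := D i i. Let T_S := Matrix.fromBlocks A B Bᵀ (Bᵀ * B − 2•1) be the adjacency matrix of the spectral total graph of Σ. Then Matrix.trace (T_S * T_S * T_S) = 6 * ((∑ i, (Nat.choose (d i + 1) 3 : ℝ)) − m). Equivalently (since trace(M³)/6 counts positive triangles minus negative triangles and the total number of triangles of T_S is 2t + m + ∑ C(d_i+1,3)), the spectral total graph T_S(Σ) has exactly t + m negative triangles, where t is the total number of triangles of Σ. -/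
import Mathlib


open Matrix

section Aux

lemma choose3_cast (k : ℕ) : ((Nat.choose (k+1) 3 : ℕ) : ℝ) = ((k:ℝ)^3 - k)/6 := by
  induction k with
  | zero => norm_num [Nat.choose]
  | succ k ih =>
    rw [Nat.choose_succ_succ' (k+1) 2]
    push_cast [ih, Nat.cast_choose_two]
    ring

lemma trace_fromBlocks' {n m : ℕ} (A : Matrix (Fin n) (Fin n) ℝ) (B : Matrix (Fin n) (Fin m) ℝ)
    (C : Matrix (Fin m) (Fin n) ℝ) (D : Matrix (Fin m) (Fin m) ℝ) :
    trace (fromBlocks A B C D) = trace A + trace D := by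
  simp [Matrix.trace, Fintype.sum_sum_type, Matrix.diag]

lemma tdiag {n : ℕ} (f : Fin n → ℝ) (M : Matrix (Fin n) (Fin n) ℝ) :
    trace (Matrix.diagonal f * M) = ∑ i, f i * M i i := by
  simp [Matrix.trace, Matrix.diag, Matrix.diagonal_mul]

variable (n m : ℕ) (B : Matrix (Fin n) (Fin m) ℝ)
    (hcol : ∀ e : Fin m, ∃ i j : Fin n, i ≠ j ∧
      (B i e = 1 ∨ B i e = -1) ∧ (B j e = 1 ∨ B j e = -1) ∧
      ∀ k : Fin n, k ≠ i → k ≠ j → B k e = 0)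
    (hsupp : ∀ e f : Fin m, (∀ i : Fin n, B i e ≠ 0 ↔ B i f ≠ 0) → e = f)

include hcol in
lemma colsq : ∀ e, ∑ i, B i e * B i e = 2 := by
  intro e
  obtain ⟨i, j, hij, hi, hj, hz⟩ := hcol e
  rw [show (2:ℝ) = B i e * B i e + B j e * B j e by
    rcases hi with h|h <;> rcases hj with h'|h' <;> rw [h,h'] <;> norm_num]
  rw [← Finset.sum_subset (Finset.subset_univ {i, j})]
  · rw [Finset.sum_insert (by simpa using hij), Finset.sum_singleton]
  · intro k _ hk
    simp only [Finset.mem_insert, Finset.mem_singleton, not_or] at hk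
    rw [hz k hk.1 hk.2]; ring

include hcol in
lemma entsq : ∀ i e, B i e ≠ 0 → B i e * B i e = 1 := by
  intro i e h
  obtain ⟨i₀, j₀, hij, hi, hj, hz⟩ := hcol e
  by_cases h1 : i = i₀
  · subst h1; rcases hi with h'|h' <;> rw [h'] <;> norm_num
  by_cases h2 : i = j₀
  · subst h2; rcases hj with h'|h' <;> rw [h'] <;> norm_num
  · exact absurd (hz i h1 h2) h

include hcol hsupp in
lemma cross_zero : ∀ (i j : Fin n) (e f : Fin m), i ≠ j → e ≠ f →
    B i e * B j e * (B i f * B j f) = 0 := by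
  intro i j e f hij hef
  by_contra h
  have hie : B i e ≠ 0 := fun h0 => h (by rw [h0]; ring)
  have hje : B j e ≠ 0 := fun h0 => h (by rw [h0]; ring)
  have hif : B i f ≠ 0 := fun h0 => h (by rw [h0]; ring)
  have hjf : B j f ≠ 0 := fun h0 => h (by rw [h0]; ring)
  refine hef (hsupp e f ?_)
  have key : ∀ g : Fin m, B i g ≠ 0 → B j g ≠ 0 → ∀ k, B k g ≠ 0 ↔ (k = i ∨ k = j) := by
    intro g hig hjg k
    obtain ⟨i₀, j₀, h₀, hi₀, hj₀, hz₀⟩ := hcol g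
    have hmem : ∀ l : Fin n, B l g ≠ 0 → l = i₀ ∨ l = j₀ := by
      intro l hl; by_contra hc; push_neg at hc; exact hl (hz₀ l hc.1 hc.2)
    have hset : ({i, j} : Set (Fin n)) = {i₀, j₀} := by
      have h1 := hmem i hig; have h2 := hmem j hjg
      rcases h1 with h1|h1 <;> rcases h2 with h2|h2 <;>
        first
        | (exfalso; exact hij (h1.trans h2.symm))
        | (subst h1; subst h2; simp [Set.pair_comm])
    constructor
    · intro hk
      have : k ∈ ({i₀, j₀} : Set (Fin n)) := by
        rcases hmem k hk with h|h <;> simp [h]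
      rw [← hset] at this; simpa using this
    · rintro (rfl|rfl) <;> assumption
  intro k
  rw [key e hie hje k, key f hif hjf k]

include hcol hsupp in
lemma NN_diag : ∀ i, ((B * Bᵀ) * (B * Bᵀ)) i i
    = ((B * Bᵀ) i i)^2 + (B * Bᵀ) i i := by
  intro i
  have hsym : ∀ a b, (B * Bᵀ) a b = (B * Bᵀ) b a := by
    intro a b; simp [Matrix.mul_apply, Matrix.transpose_apply, mul_comm]
  rw [Matrix.mul_apply]
  rw [show ∑ j, (B * Bᵀ) i j * (B * Bᵀ) j i = ∑ j, (B * Bᵀ) i j * (B * Bᵀ) i j by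
    refine Finset.sum_congr rfl fun j _ => by rw [hsym j i]]
  rw [← Finset.add_sum_erase _ _ (Finset.mem_univ i), ← sq]
  congr 1
  have expand : ∀ j, j ≠ i →
      (B * Bᵀ) i j * (B * Bᵀ) i j = ∑ e, (B i e * B j e) * (B i e * B j e) := by
    intro j hji
    rw [Matrix.mul_apply]
    simp only [Matrix.transpose_apply]
    rw [Finset.sum_mul_sum]
    refine Finset.sum_congr rfl fun e _ => ?_
    rw [Finset.sum_eq_single e
      (fun f _ hf => cross_zero n m B hcol hsupp i j e f (Ne.symm hji) hf.symm) (by simp)]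
  calc ∑ j ∈ Finset.univ.erase i, (B * Bᵀ) i j * (B * Bᵀ) i j
      = ∑ j ∈ Finset.univ.erase i, ∑ e, (B i e * B j e) * (B i e * B j e) := by
        refine Finset.sum_congr rfl fun j hj => expand j (Finset.ne_of_mem_erase hj)
    _ = ∑ e, (B i e * B i e) * ∑ j ∈ Finset.univ.erase i, (B j e * B j e) := by
        rw [Finset.sum_comm]
        refine Finset.sum_congr rfl fun e _ => ?_
        rw [Finset.mul_sum]; refine Finset.sum_congr rfl fun j _ => by ring
    _ = ∑ e, B i e * B i e := by
        refine Finset.sum_congr rfl fun e _ => ?_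
        by_cases h : B i e = 0
        · rw [h]; ring
        · rw [entsq n m B hcol i e h, Finset.sum_erase_eq_sub (Finset.mem_univ i),
            colsq n m B hcol e, entsq n m B hcol i e h]
          ring
    _ = (B * Bᵀ) i i := by simp [Matrix.mul_apply]

end Aux

/-- Signed triangle count of the spectral total graph:
`trace(T_S³) = 6 (∑ᵢ C(dᵢ+1, 3) − m)`, i.e. `T_S(Σ)` has exactly `t + m`
negative triangles. -/
theorem spectral_total_graph_negative_triangles
    (n m : ℕ) (B : Matrix (Fin n) (Fin m) ℝ)
    (hcol : ∀ e : Fin m, ∃ i j : Fin n, i ≠ j ∧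
      (B i e = 1 ∨ B i e = -1) ∧ (B j e = 1 ∨ B j e = -1) ∧
      ∀ k : Fin n, k ≠ i → k ≠ j → B k e = 0)
    (hsupp : ∀ e f : Fin m, (∀ i : Fin n, B i e ≠ 0 ↔ B i f ≠ 0) → e = f)
    (d : Fin n → ℕ) (hd : ∀ i : Fin n, (B * Bᵀ) i i = (d i : ℝ)) :
    let D : Matrix (Fin n) (Fin n) ℝ := Matrix.diagonal fun i => (B * Bᵀ) i i
    let A : Matrix (Fin n) (Fin n) ℝ := D - B * Bᵀ
    let TS : Matrix (Fin n ⊕ Fin m) (Fin n ⊕ Fin m) ℝ :=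
      Matrix.fromBlocks A B Bᵀ (Bᵀ * B - (2 : ℝ) • 1)
    Matrix.trace (TS * TS * TS) =
      6 * ((∑ i : Fin n, ((Nat.choose (d i + 1) 3 : ℕ) : ℝ)) - (m : ℝ)) := by
  intro D A TS
  -- notation
  set S1 : ℝ := ∑ i, (d i : ℝ) with hS1def
  set S2 : ℝ := ∑ i, (d i : ℝ)^2 with hS2def
  set S3 : ℝ := ∑ i, (d i : ℝ)^3 with hS3def
  have hDdiag : D = Matrix.diagonal (fun i => (d i : ℝ)) := by
    show Matrix.diagonal _ = _
    rw [funext hd]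
  have hN2 : ∀ i, ((B * Bᵀ) * (B * Bᵀ)) i i = (d i : ℝ)^2 + d i := by
    intro i; rw [NN_diag n m B hcol hsupp i, hd i]
  -- block expansion
  have h1 : TS * TS * TS = fromBlocks
      ((A*A + B*Bᵀ)*A + (A*B + B*(Bᵀ*B - (2:ℝ)•1))*Bᵀ)
      ((A*A + B*Bᵀ)*B + (A*B + B*(Bᵀ*B - (2:ℝ)•1))*(Bᵀ*B - (2:ℝ)•1))
      ((Bᵀ*A + (Bᵀ*B - (2:ℝ)•1)*Bᵀ)*A + (Bᵀ*B + (Bᵀ*B - (2:ℝ)•1)*(Bᵀ*B - (2:ℝ)•1))*Bᵀ)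
      ((Bᵀ*A + (Bᵀ*B - (2:ℝ)•1)*Bᵀ)*B
        + (Bᵀ*B + (Bᵀ*B - (2:ℝ)•1)*(Bᵀ*B - (2:ℝ)•1))*(Bᵀ*B - (2:ℝ)•1)) := by
    show (fromBlocks A B Bᵀ _) * _ * _ = _
    rw [fromBlocks_multiply, fromBlocks_multiply]
  rw [h1, trace_fromBlocks']
  simp only [A, Matrix.sub_mul, Matrix.mul_sub, Matrix.add_mul, Matrix.mul_add,
    Matrix.smul_mul, Matrix.mul_smul, Matrix.mul_one, Matrix.one_mul, Matrix.mul_assoc,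
    trace_add, trace_sub, trace_smul, smul_eq_mul]
  -- monomial trace values
  have a1 : (D * (D * D)).trace = S3 := by
    rw [hDdiag, Matrix.diagonal_mul_diagonal, Matrix.diagonal_mul_diagonal, trace_diagonal]
    exact Finset.sum_congr rfl fun i _ => by ring
  have a2 : (B * (Bᵀ * (D * D))).trace = S3 := by
    rw [show B * (Bᵀ * (D * D)) = (B * Bᵀ) * (D * D) from (Matrix.mul_assoc _ _ _).symm,
      trace_mul_comm, hDdiag, Matrix.diagonal_mul_diagonal, tdiag]
    simp only [hd]
    exact Finset.sum_congr rfl fun i _ => by ring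
  have a3 : (D * (B * (Bᵀ * D))).trace = S3 := by
    rw [hDdiag, tdiag]
    simp only [← Matrix.mul_assoc, Matrix.mul_diagonal, hd]
    exact Finset.sum_congr rfl fun i _ => by ring
  have a4 : (B * (Bᵀ * (B * (Bᵀ * D)))).trace = S3 + S2 := by
    rw [show B * (Bᵀ * (B * (Bᵀ * D))) = ((B * Bᵀ) * (B * Bᵀ)) * D by
      simp [Matrix.mul_assoc], trace_mul_comm, hDdiag, tdiag]
    simp only [hN2]
    rw [← Finset.sum_add_distrib]
    exact Finset.sum_congr rfl fun i _ => by ring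
  have a5 : (B * (Bᵀ * D)).trace = S2 := by
    rw [show B * (Bᵀ * D) = (B * Bᵀ) * D from (Matrix.mul_assoc _ _ _).symm,
      trace_mul_comm, hDdiag, tdiag]
    simp only [hd]
    exact Finset.sum_congr rfl fun i _ => by ring
  have a6 : (D * (D * (B * Bᵀ))).trace = S3 := by
    rw [show D * (D * (B * Bᵀ)) = (D * D) * (B * Bᵀ) from (Matrix.mul_assoc _ _ _).symm,
      hDdiag, Matrix.diagonal_mul_diagonal, tdiag]
    simp only [hd]
    exact Finset.sum_congr rfl fun i _ => by ring
  have a7 : (B * (Bᵀ * (D * (B * Bᵀ)))).trace = S3 + S2 := by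
    rw [show B * (Bᵀ * (D * (B * Bᵀ))) = (B * Bᵀ) * (D * (B * Bᵀ)) from
        (Matrix.mul_assoc _ _ _).symm,
      trace_mul_comm,
      show D * (B * Bᵀ) * (B * Bᵀ) = D * ((B * Bᵀ) * (B * Bᵀ)) from Matrix.mul_assoc _ _ _,
      hDdiag, tdiag]
    simp only [hN2]
    rw [← Finset.sum_add_distrib]
    exact Finset.sum_congr rfl fun i _ => by ring
  have a8 : (D * (B * (Bᵀ * (B * Bᵀ)))).trace = S3 + S2 := by
    rw [show B * (Bᵀ * (B * Bᵀ)) = (B * Bᵀ) * (B * Bᵀ) by simp [Matrix.mul_assoc],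
      hDdiag, tdiag]
    simp only [hN2]
    rw [← Finset.sum_add_distrib]
    exact Finset.sum_congr rfl fun i _ => by ring
  have a9 : (Bᵀ * (B * (Bᵀ * (B * (Bᵀ * B))))).trace
      = (B * (Bᵀ * (B * (Bᵀ * (B * Bᵀ))))).trace := by
    rw [trace_mul_comm]
    congr 1
    simp [Matrix.mul_assoc]
  have a10 : (B * (Bᵀ * (B * Bᵀ))).trace = S2 + S1 := by
    rw [show B * (Bᵀ * (B * Bᵀ)) = (B * Bᵀ) * (B * Bᵀ) by simp [Matrix.mul_assoc]]
    rw [Matrix.trace]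
    simp only [Matrix.diag]
    rw [show ∑ i, ((B * Bᵀ) * (B * Bᵀ)) i i = ∑ i, ((d i:ℝ)^2 + d i) from
      Finset.sum_congr rfl fun i _ => hN2 i]
    rw [← Finset.sum_add_distrib]
  have a11 : (D * (B * Bᵀ)).trace = S2 := by
    rw [hDdiag, tdiag]
    simp only [hd]
    exact Finset.sum_congr rfl fun i _ => by ring
  have a12 : (B * Bᵀ).trace = S1 := by
    rw [Matrix.trace]
    simp only [Matrix.diag]
    exact Finset.sum_congr rfl fun i _ => hd i
  have a13 : (Bᵀ * (D * B)).trace = S2 := by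
    rw [trace_mul_comm, Matrix.mul_assoc, hDdiag, tdiag]
    simp only [hd]
    exact Finset.sum_congr rfl fun i _ => by ring
  have a14 : (Bᵀ * (B * (Bᵀ * B))).trace = S2 + S1 := by
    rw [trace_mul_comm, show B * (Bᵀ * B) * Bᵀ = B * (Bᵀ * (B * Bᵀ)) by
      simp [Matrix.mul_assoc], a10]
  have a15 : (Bᵀ * B).trace = S1 := by rw [trace_mul_comm, a12]
  have hS1m : S1 = 2 * m := by
    have : (Bᵀ * B).trace = 2 * m := by
      rw [Matrix.trace]
      simp only [Matrix.diag]
      rw [show ∑ e, (Bᵀ * B) e e = ∑ e : Fin m, (2:ℝ) from Finset.sum_congr rfl fun e _ => by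
        rw [Matrix.mul_apply]
        simp only [Matrix.transpose_apply]
        exact colsq n m B hcol e]
      simp [mul_comm]
    rw [← a15, this]
  have a17 : trace (1 : Matrix (Fin m) (Fin m) ℝ) = m := by simp
  rw [a1, a2, a3, a4, a5, a6, a7, a8, a9, a10, a11, a12, a13, a14, a15, a17]
  -- right-hand side
  have hrhs : ∑ i : Fin n, ((Nat.choose (d i + 1) 3 : ℕ) : ℝ) = (S3 - S1)/6 := by
    rw [show ∑ i : Fin n, ((Nat.choose (d i + 1) 3 : ℕ) : ℝ)
        = ∑ i : Fin n, (((d i:ℝ)^3 - d i)/6) from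
      Finset.sum_congr rfl fun i _ => choose3_cast (d i)]
    rw [hS3def, hS1def, ← Finset.sum_sub_distrib, Finset.sum_div]
  rw [hrhs]
  ring_nf
  linarith [hS1m]
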